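/- Let q be odd and k = q-2. The set of syndromes of deep holes of PRS(q-2) is exactly P^2(F_q) minus the q+1 points {c_3(t) : t ∈ F_q ∪ {∞}}, and in particular there are exactly q^2 deep hole classes; moreover the covering radius of PRS(q-2) is 2. -/

import Mathlib

open Matrix Polynomial

/-- The column `c_m(t)` of the PRS generator matrix: `(1,t,...,t^{m-1})` for `t ∈ F`
(`some a`), and `(0,...,0,1)` for `t = ∞` (`none`). -/
def PRScol (F : Type*) [Field F] (m : ℕ) : Option F → Fin m → F
  | some a => fun i => a ^ (i : ℕ)
  | none => fun i => if (i : ℕ) = m - 1 then 1 else 0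

/-- The generator matrix `G_m` of the projective Reed-Solomon code, with columns
indexed by `Option F = F ∪ {∞}`. -/
def PRSmat (F : Type*) [Field F] (m : ℕ) : Matrix (Fin m) (Option F) F :=
  Matrix.of fun i t => PRScol F m t i

/-- The projective Reed-Solomon code `PRS(m)`: the row span of `G_m`. -/
def PRS (F : Type*) [Field F] (m : ℕ) : Submodule F (Option F → F) :=
  Submodule.span F (Set.range (PRSmat F m))

/-- Error distance of a word `u` to a set of codewords `C`. -/
noncomputable def errDist {F ι : Type*} [DecidableEq F] [Fintype ι]
    (u : ι → F) (C : Set (ι → F)) : ℕ :=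
  sInf {d | ∃ c ∈ C, hammingDist u c = d}

/-- Covering radius of a set of codewords `C`. -/
noncomputable def covRad {F ι : Type*} [DecidableEq F] [Fintype ι]
    (C : Set (ι → F)) : ℕ :=
  sSup {r | ∃ u : ι → F, errDist u C = r}

/-- Minimum distance of a code `C`. -/
noncomputable def minDist {F ι : Type*} [DecidableEq F] [Fintype ι]
    (C : Set (ι → F)) : ℕ :=
  sInf {d | ∃ x ∈ C, ∃ y ∈ C, x ≠ y ∧ hammingDist x y = d}

/-- The matrix `g_m` associated to a 2×2 matrix `g = [[a,b],[c,d]]`: its `(i,j)` entry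
(0-indexed) is the coefficient of `X^j` in `(a+bX)^{m-1-i} (c+dX)^i`. -/
noncomputable def glift (F : Type*) [Field F] (m : ℕ) (g : Matrix (Fin 2) (Fin 2) F) :
    Matrix (Fin m) (Fin m) F :=
  Matrix.of fun i j =>
    ((Polynomial.C (g 0 0) + Polynomial.C (g 0 1) * Polynomial.X) ^ (m - 1 - (i : ℕ)) *
      (Polynomial.C (g 1 0) + Polynomial.C (g 1 1) * Polynomial.X) ^ (i : ℕ)).coeff (j : ℕ)

/-- The Möbius action of `g = [[a,b],[c,d]]` on `F ∪ {∞}`: `t ↦ (c+dt)/(a+bt)`. -/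
def mobius {F : Type*} [Field F] [DecidableEq F]
    (g : Matrix (Fin 2) (Fin 2) F) : Option F → Option F
  | some x =>
      if g 0 0 + g 0 1 * x = 0 then none
      else some ((g 1 0 + g 1 1 * x) / (g 0 0 + g 0 1 * x))
  | none => if g 0 1 = 0 then none else some (g 1 1 / g 0 1)

/-- The point `N_m = (0,...,0,1,0)` (1 in position `m-1` of `1..m`, i.e. index `m-2`). -/
def Nvec (F : Type*) [Field F] (m : ℕ) : Fin m → F :=
  fun i => if (i : ℕ) = m - 2 then 1 else 0

section Aux

variable {F : Type*} [Field F] [DecidableEq F]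

lemma PRScol_ne_zero (t : Option F) : PRScol F 3 t ≠ 0 := by
  cases t with
  | none => intro h; have := congrFun h 2; simp [PRScol] at this
  | some a => intro h; have := congrFun h 0; simp [PRScol] at this

variable [Fintype F]

lemma mulVec_single' (t : Option F) (a : F) :
    (PRSmat F 3).mulVec (Pi.single t a) = a • PRScol F 3 t := by
  rw [Matrix.mulVec_single]
  funext i
  simp [PRSmat, mul_comm]

lemma hammingNorm_single_le (t : Option F) (a : F) :
    hammingNorm (Pi.single t a : Option F → F) ≤ 1 := by
  simp only [hammingNorm]
  refine le_trans (Finset.card_le_card (fun x hx => ?_)) (by simp : ({t} : Finset (Option F)).card ≤ 1)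
  simp only [Finset.mem_filter, Finset.mem_univ, true_and] at hx
  simp only [Finset.mem_singleton]
  by_contra hne
  apply hx
  rw [Pi.single_eq_of_ne hne]

lemma errDist_ker (u : Option F → F) :
    errDist u {x : Option F → F | (PRSmat F 3).mulVec x = 0} =
      sInf {d | ∃ v : Option F → F,
        (PRSmat F 3).mulVec v = (PRSmat F 3).mulVec u ∧ hammingNorm v = d} := by
  unfold errDist
  congr 1
  ext d
  constructor
  · rintro ⟨c, hc, rfl⟩
    refine ⟨u - c, ?_, by rw [hammingDist_comm, hammingDist_eq_hammingNorm, neg_add_eq_sub]⟩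
    rw [Matrix.mulVec_sub, Set.mem_setOf_eq.mp hc, sub_zero]
  · rintro ⟨v, hv, rfl⟩
    refine ⟨u - v, ?_, ?_⟩
    · simp only [Set.mem_setOf_eq, Matrix.mulVec_sub, hv, sub_self]
    · rw [hammingDist_comm, hammingDist_eq_hammingNorm, neg_add_eq_sub, sub_sub_cancel]

lemma exists_vec_two (t1 t2 : Option F) (hne : t1 ≠ t2) (a b : F) :
    ∃ v : Option F → F,
      (PRSmat F 3).mulVec v = a • PRScol F 3 t1 + b • PRScol F 3 t2 ∧ hammingNorm v ≤ 2 := by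
  refine ⟨Pi.single t1 a + Pi.single t2 b, ?_, ?_⟩
  · rw [Matrix.mulVec_add, mulVec_single', mulVec_single']
  · simp only [hammingNorm]
    refine le_trans (Finset.card_le_card (fun x hx => ?_))
      (le_trans (Finset.card_insert_le t1 {t2}) (by simp))
    simp only [Finset.mem_filter, Finset.mem_univ, true_and] at hx
    simp only [Finset.mem_insert, Finset.mem_singleton]
    by_contra hc
    push_neg at hc
    apply hx
    simp [Pi.single_eq_of_ne hc.1, Pi.single_eq_of_ne hc.2]

lemma exists_rep_two (h2 : (2:F) ≠ 0) (s : Fin 3 → F) :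
    ∃ v : Option F → F, (PRSmat F 3).mulVec v = s ∧ hammingNorm v ≤ 2 := by
  by_cases h0 : s 0 = 0
  · by_cases h1 : s 1 = 0
    · refine ⟨Pi.single none (s 2), ?_, le_trans (hammingNorm_single_le _ _) one_le_two⟩
      rw [mulVec_single']
      funext i
      fin_cases i <;> simp [PRScol, h0, h1]
    · by_cases hs2 : s 2 = 0
      · obtain ⟨v, hv, hn⟩ := exists_vec_two (some 1) (some (-1))
          (by simp only [ne_eq, Option.some.injEq]; intro h; apply h2; linear_combination h)
          (s 1 / 2) (-(s 1 / 2))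
        refine ⟨v, ?_, hn⟩
        rw [hv]; funext i; fin_cases i <;>
          simp [PRScol, h0, hs2] <;> field_simp <;> ring
      · obtain ⟨v, hv, hn⟩ := exists_vec_two (some (s 2 / s 1)) (some 0)
          (by simp only [ne_eq, Option.some.injEq, _root_.div_eq_zero_iff]; tauto)
          (s 1 ^ 2 / s 2) (-(s 1 ^ 2 / s 2))
        refine ⟨v, ?_, hn⟩
        rw [hv]; funext i; fin_cases i <;>
          simp [PRScol, h0] <;> field_simp <;> ring
  · obtain ⟨v, hv, hn⟩ := exists_vec_two (some (s 1 / s 0)) none (by simp)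
      (s 0) (s 2 - s 0 * (s 1 / s 0) ^ 2)
    refine ⟨v, ?_, hn⟩
    rw [hv]; funext i; fin_cases i <;>
      simp [PRScol] <;> field_simp <;> ring

end Aux

section Aux2

variable {F : Type*} [Field F] [DecidableEq F] [Fintype F]

lemma errDist_le_two (h2 : (2:F) ≠ 0) (u : Option F → F) :
    errDist u {x : Option F → F | (PRSmat F 3).mulVec x = 0} ≤ 2 := by
  rw [errDist_ker]
  obtain ⟨v, hv, hn⟩ := exists_rep_two h2 ((PRSmat F 3).mulVec u)
  exact le_trans (Nat.sInf_le ⟨v, hv, rfl⟩) hn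

lemma errDist_le_one_of (u : Option F → F) (t : Option F) (a : F)
    (h : (PRSmat F 3).mulVec u = a • PRScol F 3 t) :
    errDist u {x : Option F → F | (PRSmat F 3).mulVec x = 0} ≤ 1 := by
  rw [errDist_ker]
  refine le_trans (Nat.sInf_le ⟨Pi.single t a, ?_, rfl⟩) (hammingNorm_single_le t a)
  rw [mulVec_single', h]

lemma prop_of_errDist_le_one (u : Option F → F)
    (h : errDist u {x : Option F → F | (PRSmat F 3).mulVec x = 0} ≤ 1) :
    ∃ (t : Option F) (a : F), (PRSmat F 3).mulVec u = a • PRScol F 3 t := by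
  rw [errDist_ker] at h
  have hne : {d | ∃ v : Option F → F,
      (PRSmat F 3).mulVec v = (PRSmat F 3).mulVec u ∧ hammingNorm v = d}.Nonempty :=
    ⟨hammingNorm u, u, rfl, rfl⟩
  obtain ⟨v, hv, hd⟩ := Nat.sInf_mem hne
  have hn1 : hammingNorm v ≤ 1 := by rw [hd]; exact h
  by_cases hv0 : v = 0
  · exact ⟨none, 0, by rw [← hv, hv0, Matrix.mulVec_zero, zero_smul]⟩
  · obtain ⟨t, ht⟩ : ∃ t, v t ≠ 0 := by
      by_contra hc; push_neg at hc; exact hv0 (funext hc)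
    have hall : ∀ t', t' ≠ t → v t' = 0 := by
      intro t' htt'
      by_contra ht'
      have h2le : ({t, t'} : Finset (Option F)).card ≤ hammingNorm v := by
        refine Finset.card_le_card ?_
        intro x hx
        simp only [Finset.mem_insert, Finset.mem_singleton] at hx
        simp only [hammingNorm, Finset.mem_filter, Finset.mem_univ, true_and]
        rcases hx with rfl | rfl <;> assumption
      rw [Finset.card_insert_of_notMem (by simp [Ne.symm htt']), Finset.card_singleton] at h2le
      omega
    have hvs : v = Pi.single t (v t) := by
      funext t'
      rcases eq_or_ne t' t with rfl | h'
      · simp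
      · rw [Pi.single_eq_of_ne h', hall t' h']
    refine ⟨t, v t, ?_⟩
    rw [← hv]
    conv_lhs => rw [hvs]
    rw [mulVec_single']

lemma errDist_eq_two_iff (h2 : (2:F) ≠ 0) (u : Option F → F) :
    errDist u {x : Option F → F | (PRSmat F 3).mulVec x = 0} = 2 ↔
      ¬∃ (t : Option F) (a : F), (PRSmat F 3).mulVec u = a • PRScol F 3 t := by
  constructor
  · rintro he ⟨t, a, h⟩
    have := errDist_le_one_of u t a h
    omega
  · intro hno
    have hle := errDist_le_two h2 u
    rcases Nat.lt_or_ge (errDist u {x : Option F → F | (PRSmat F 3).mulVec x = 0}) 2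
      with hlt | hge
    · exact absurd (prop_of_errDist_le_one u (by omega)) hno
    · omega

lemma N_not_prop : ¬∃ (t : Option F) (a : F),
    (Nvec F 3 : Fin 3 → F) = a • PRScol F 3 t := by
  rintro ⟨t, a, h⟩
  cases t with
  | none =>
    have := congrFun h 1
    simp [Nvec, PRScol] at this
  | some x =>
    have h0 := congrFun h 0
    have h1 := congrFun h 1
    simp [Nvec, PRScol] at h0 h1
    rw [← h0] at h1
    simp at h1

end Aux2

section Aux3

variable {F : Type*} [Field F] [DecidableEq F] [Fintype F]

lemma card_proj :
    Nat.card (Projectivization F (Fin 3 → F)) =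
      Fintype.card F ^ 2 + Fintype.card F + 1 := by
  classical
  have hne1 : ∀ b c : F, (![1, b, c] : Fin 3 → F) ≠ 0 := by
    intro b c h; have := congrFun h 0; simp at this
  have hne2 : ∀ c : F, (![0, 1, c] : Fin 3 → F) ≠ 0 := by
    intro c h; have := congrFun h 1; simp at this
  have hne3 : (![0, 0, 1] : Fin 3 → F) ≠ 0 := by
    intro h; have := congrFun h 2; simp at this
  set f1 : F × F → Projectivization F (Fin 3 → F) :=
    fun p => Projectivization.mk F ![1, p.1, p.2] (hne1 p.1 p.2) with hf1
  set f2 : F → Projectivization F (Fin 3 → F) :=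
    fun c => Projectivization.mk F ![0, 1, c] (hne2 c) with hf2
  set p3 : Projectivization F (Fin 3 → F) := Projectivization.mk F ![0, 0, 1] hne3 with hp3
  have hinj1 : Function.Injective f1 := by
    intro p q h
    rw [hf1, Projectivization.mk_eq_mk_iff] at h
    obtain ⟨a, ha⟩ := h
    have h0 := congrFun ha 0
    have h1 := congrFun ha 1
    have h2 := congrFun ha 2
    simp [Units.smul_def] at h0 h1 h2
    simp only [h0, Units.val_one, one_mul] at h1 h2
    exact (Prod.ext h1 h2).symm
  have hinj2 : Function.Injective f2 := by
    intro p q h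
    rw [hf2, Projectivization.mk_eq_mk_iff] at h
    obtain ⟨a, ha⟩ := h
    have h1 := congrFun ha 1
    have h2 := congrFun ha 2
    simp [Units.smul_def] at h1 h2
    simp only [h1, Units.val_one, one_mul] at h2
    exact h2.symm
  have hd12 : Disjoint (Set.range f1) (Set.range f2) := by
    rw [Set.disjoint_left]
    rintro y ⟨p, rfl⟩ ⟨c, hc⟩
    rw [hf1, hf2, Projectivization.mk_eq_mk_iff] at hc
    obtain ⟨a, ha⟩ := hc
    have h0 := congrFun ha 0
    simp [Units.smul_def] at h0
  have hd3 : Disjoint (Set.range f1 ∪ Set.range f2) {p3} := by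
    rw [Set.disjoint_right]
    rintro y hy h'
    rw [Set.mem_singleton_iff] at hy
    subst hy
    rcases h' with ⟨p, hp⟩ | ⟨c, hc⟩
    · rw [hf1, hp3, Projectivization.mk_eq_mk_iff] at hp
      obtain ⟨a, ha⟩ := hp
      have h0 := congrFun ha 0
      simp [Units.smul_def] at h0
    · rw [hf2, hp3, Projectivization.mk_eq_mk_iff] at hc
      obtain ⟨a, ha⟩ := hc
      have h1 := congrFun ha 1
      simp [Units.smul_def] at h1
  have hcover : ∀ y : Projectivization F (Fin 3 → F),
      y ∈ Set.range f1 ∪ Set.range f2 ∪ {p3} := by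
    intro y
    induction y using Projectivization.ind with
    | h v hv =>
      by_cases h0 : v 0 = 0
      · by_cases h1 : v 1 = 0
        · have h2 : v 2 ≠ 0 := by
            intro h2
            apply hv
            funext i
            fin_cases i <;> assumption
          refine Or.inr ?_
          rw [Set.mem_singleton_iff, hp3, Projectivization.mk_eq_mk_iff]
          refine ⟨Units.mk0 (v 2) h2, ?_⟩
          funext i
          fin_cases i <;> simp [Units.smul_def, h0, h1]
        · refine Or.inl (Or.inr ⟨v 2 / v 1, ?_⟩)
          rw [hf2, Projectivization.mk_eq_mk_iff]
          refine ⟨(Units.mk0 (v 1) h1)⁻¹, ?_⟩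
          funext i
          fin_cases i <;> simp [Units.smul_def, h0] <;> field_simp
      · refine Or.inl (Or.inl ⟨(v 1 / v 0, v 2 / v 0), ?_⟩)
        rw [hf1, Projectivization.mk_eq_mk_iff]
        refine ⟨(Units.mk0 (v 0) h0)⁻¹, ?_⟩
        funext i
        fin_cases i <;> simp [Units.smul_def] <;> field_simp
  have huniv : (Set.univ : Set (Projectivization F (Fin 3 → F))) =
      Set.range f1 ∪ Set.range f2 ∪ {p3} := (Set.eq_univ_of_forall hcover).symm
  rw [← Set.ncard_univ, huniv, Set.ncard_union_eq hd3, Set.ncard_union_eq hd12,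
    Set.ncard_singleton, ← Set.image_univ, Set.ncard_image_of_injective _ hinj1,
    ← Set.image_univ (f := f2), Set.ncard_image_of_injective _ hinj2,
    Set.ncard_univ, Set.ncard_univ, Nat.card_eq_fintype_card, Nat.card_eq_fintype_card,
    Fintype.card_prod, sq]

lemma conic_card :
    ({y : Projectivization F (Fin 3 → F) | ∃ t : Option F, ∃ h : PRScol F 3 t ≠ 0,
        y = Projectivization.mk F (PRScol F 3 t) h}).ncard = Fintype.card F + 1 := by
  have hinjc : Function.Injective
      (fun t : Option F => Projectivization.mk F (PRScol F 3 t) (PRScol_ne_zero t)) := by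
    intro t1 t2 h
    simp only at h
    rw [Projectivization.mk_eq_mk_iff] at h
    obtain ⟨a, ha⟩ := h
    cases t1 with
    | none =>
      cases t2 with
      | none => rfl
      | some y =>
        have h0 := congrFun ha 0
        simp [Units.smul_def, PRScol] at h0
    | some x =>
      cases t2 with
      | none =>
        have h0 := congrFun ha 0
        simp [Units.smul_def, PRScol] at h0
      | some y =>
        have h0 := congrFun ha 0
        have h1 := congrFun ha 1
        simp [Units.smul_def, PRScol] at h0 h1
        simp only [h0, Units.val_one, one_mul] at h1
        rw [h1]
  have hS : {y : Projectivization F (Fin 3 → F) | ∃ t : Option F, ∃ h : PRScol F 3 t ≠ 0,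
        y = Projectivization.mk F (PRScol F 3 t) h} =
      Set.range (fun t : Option F => Projectivization.mk F (PRScol F 3 t) (PRScol_ne_zero t)) := by
    ext y
    simp only [Set.mem_setOf_eq, Set.mem_range]
    constructor
    · rintro ⟨t, h, rfl⟩; exact ⟨t, rfl⟩
    · rintro ⟨t, rfl⟩; exact ⟨t, PRScol_ne_zero t, rfl⟩
  rw [hS, ← Set.image_univ, Set.ncard_image_of_injective _ hinjc, Set.ncard_univ,
    Nat.card_eq_fintype_card, Fintype.card_option]

end Aux3

/-- For odd $q$: $PRS(q-2)$ (with parity check matrix $G_3$) has covering radius $2$, the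
set of projective syndromes of its deep holes is exactly $P^2(F_q)$ minus the $q+1$ points
of the conic ${c_3(t)}$, and there are exactly $q^2$ deep hole classes. -/
theorem stmt19 (F : Type*) [Field F] [Fintype F] [DecidableEq F]
    (hq : Odd (Fintype.card F)) :
    covRad {x : Option F → F | (PRSmat F 3).mulVec x = 0} = 2 ∧
    {y : Projectivization F (Fin 3 → F) |
        ∃ u : Option F → F, ∃ h : (PRSmat F 3).mulVec u ≠ 0,
          errDist u {x : Option F → F | (PRSmat F 3).mulVec x = 0} =
              covRad {x : Option F → F | (PRSmat F 3).mulVec x = 0} ∧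
            y = Projectivization.mk F ((PRSmat F 3).mulVec u) h} =
      {y : Projectivization F (Fin 3 → F) |
        ∃ t : Option F, ∃ h : PRScol F 3 t ≠ 0,
          y = Projectivization.mk F (PRScol F 3 t) h}ᶜ ∧
    Set.ncard {y : Projectivization F (Fin 3 → F) |
        ∃ u : Option F → F, ∃ h : (PRSmat F 3).mulVec u ≠ 0,
          errDist u {x : Option F → F | (PRSmat F 3).mulVec x = 0} =
              covRad {x : Option F → F | (PRSmat F 3).mulVec x = 0} ∧
            y = Projectivization.mk F ((PRSmat F 3).mulVec u) h} =
      Fintype.card F ^ 2 := by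
  have h2F : (2 : F) ≠ 0 := by
    refine Ring.two_ne_zero ?_
    intro hc
    have h1 := FiniteField.even_card_of_char_two hc
    have h2 := Nat.odd_iff.mp hq
    omega
  have hcov : covRad {x : Option F → F | (PRSmat F 3).mulVec x = 0} = 2 := by
    unfold covRad
    apply le_antisymm
    · refine csSup_le ⟨errDist 0 {x : Option F → F | (PRSmat F 3).mulVec x = 0}, 0, rfl⟩ ?_
      rintro r ⟨u, rfl⟩
      exact errDist_le_two h2F u
    · obtain ⟨u, hu, _⟩ := exists_rep_two h2F (Nvec F 3)
      have hu2 : errDist u {x : Option F → F | (PRSmat F 3).mulVec x = 0} = 2 :=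
        (errDist_eq_two_iff h2F u).mpr (by rw [hu]; exact N_not_prop)
      refine le_csSup ⟨2, ?_⟩ ⟨u, hu2⟩
      rintro r ⟨u', rfl⟩
      exact errDist_le_two h2F u'
  have hset : {y : Projectivization F (Fin 3 → F) |
        ∃ u : Option F → F, ∃ h : (PRSmat F 3).mulVec u ≠ 0,
          errDist u {x : Option F → F | (PRSmat F 3).mulVec x = 0} = 2 ∧
            y = Projectivization.mk F ((PRSmat F 3).mulVec u) h} =
      {y : Projectivization F (Fin 3 → F) |
        ∃ t : Option F, ∃ h : PRScol F 3 t ≠ 0,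
          y = Projectivization.mk F (PRScol F 3 t) h}ᶜ := by
    ext y
    simp only [Set.mem_setOf_eq, Set.mem_compl_iff]
    constructor
    · rintro ⟨u, hGu, he, rfl⟩
      rintro ⟨t, ht, hy⟩
      rw [Projectivization.mk_eq_mk_iff] at hy
      obtain ⟨a, ha⟩ := hy
      exact (errDist_eq_two_iff h2F u).mp he ⟨t, (a : F), by rw [← ha, Units.smul_def]⟩
    · intro hyS
      obtain ⟨u, hu, _⟩ := exists_rep_two h2F y.rep
      have hGu : (PRSmat F 3).mulVec u ≠ 0 := by rw [hu]; exact y.rep_nonzero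
      refine ⟨u, hGu, ?_, ?_⟩
      · rw [errDist_eq_two_iff h2F]
        rintro ⟨t, a, hprop⟩
        apply hyS
        have ha : a ≠ 0 := by rintro rfl; rw [zero_smul] at hprop; exact hGu hprop
        refine ⟨t, PRScol_ne_zero t, ?_⟩
        rw [← Projectivization.mk_rep y, Projectivization.mk_eq_mk_iff]
        exact ⟨Units.mk0 a ha, by rw [Units.smul_def, Units.val_mk0, ← hprop, hu]⟩
      · rw [← Projectivization.mk_rep y, Projectivization.mk_eq_mk_iff]
        exact ⟨1, by rw [Units.smul_def, Units.val_one, one_smul, hu]⟩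
  refine ⟨hcov, ?_, ?_⟩
  · rw [hcov]
    exact hset
  · rw [hcov, hset]
    haveI : Finite (Projectivization F (Fin 3 → F)) := Quotient.finite _
    have hcompl := Set.ncard_add_ncard_compl
      {y : Projectivization F (Fin 3 → F) |
        ∃ t : Option F, ∃ h : PRScol F 3 t ≠ 0,
          y = Projectivization.mk F (PRScol F 3 t) h}
    rw [conic_card, card_proj] at hcompl
    omega
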